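/- For jointly distributed random variables X and Y, the supremum over all square-integrable functions f of the linear correlation coefficient ρ(X, f(Y)) is achieved by f(Y) = E[X|Y], and equals ‖E[X|Y] − E[X]‖₂ / √var(X) (assuming var(X) > 0). -/

import Mathlib

open MeasureTheory ProbabilityTheory Real

noncomputable def maxCorr {Ω α β : Type} [MeasurableSpace Ω] [MeasurableSpace α]
    [MeasurableSpace β] (μ : Measure Ω) (X : Ω → α) (Y : Ω → β) : ℝ :=
  sSup {r : ℝ | ∃ (g : α → ℝ) (f : β → ℝ), Measurable g ∧ Measurable f ∧
    (∫ ω, g (X ω) ∂μ) = 0 ∧ (∫ ω, f (Y ω) ∂μ) = 0 ∧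
    (∫ ω, (g (X ω))^2 ∂μ) = 1 ∧ (∫ ω, (f (Y ω))^2 ∂μ) = 1 ∧
    r = ∫ ω, g (X ω) * f (Y ω) ∂μ}

noncomputable def corr {Ω : Type} [MeasurableSpace Ω] (μ : Measure Ω) (U V : Ω → ℝ) : ℝ :=
  (∫ ω, (U ω - ∫ x, U x ∂μ) * (V ω - ∫ x, V x ∂μ) ∂μ) /
    (Real.sqrt (variance U μ) * Real.sqrt (variance V μ))

/-!
For a `σ(Y)`-measurable `g`, the tower property gives `cov(X, g) = cov(E[X|Y], g)`, so by
Cauchy–Schwarz `|ρ(X, g)| ≤ σ(E[X|Y]) / σ(X) = ρ(X, E[X|Y])`. By Doob–Dynkin `E[X|Y] = f(Y)`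
with `f` measurable, so the bound is attained unless `E[X|Y]` has zero variance; then the bound
is `0` (`ρ` is `0` when a variance vanishes, as `x / 0 = 0`), and so is the supremum.
-/

lemma Real.sSup_eq_of_forall_abs_le {S : Set ℝ} {c : ℝ} (hS : ∀ r ∈ S, |r| ≤ c)
    (hc : c ∈ S ∨ c = 0) : sSup S = c := by
  have hc0 : 0 ≤ c := hc.elim (fun h => (abs_nonneg c).trans (hS c h)) ge_of_eq
  refine le_antisymm (Real.sSup_le (fun r hr => (le_abs_self r).trans (hS r hr)) hc0) ?_
  rcases hc with hc | rfl
  · exact le_csSup ⟨c, fun r hr => (le_abs_self r).trans (hS r hr)⟩ hc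
  · exact Real.sSup_nonneg fun r hr => (abs_nonpos_iff.mp (hS r hr)).ge

namespace ProbabilityTheory

section Covariance

variable {Ω : Type*} {m mΩ : MeasurableSpace Ω} {μ : Measure Ω} {U V X g : Ω → ℝ}

lemma sq_covariance_le_variance_mul_variance [IsFiniteMeasure μ] (hU : MemLp U 2 μ)
    (hV : MemLp V 2 μ) : cov[U, V; μ] ^ 2 ≤ Var[U; μ] * Var[V; μ] := by
  have hquad : ∀ t : ℝ, 0 ≤ Var[U; μ] * (t * t) + 2 * cov[U, V; μ] * t + Var[V; μ] := by
    intro t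
    have h := variance_add (hU.const_smul t) hV
    rw [variance_smul, covariance_smul_left] at h
    nlinarith [variance_nonneg (t • U + V) μ]
  have := discrim_le_zero hquad
  rw [discrim] at this
  nlinarith

lemma abs_covariance_le_sqrt_variance_mul [IsFiniteMeasure μ] (hU : MemLp U 2 μ)
    (hV : MemLp V 2 μ) : |cov[U, V; μ]| ≤ √Var[U; μ] * √Var[V; μ] := by
  rw [← Real.sqrt_mul (variance_nonneg U μ)]
  exact Real.abs_le_sqrt (sq_covariance_le_variance_mul_variance hU hV)

lemma covariance_condExp_left [IsProbabilityMeasure μ] (hm : m ≤ mΩ) (hX : MemLp X 2 μ)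
    (hgm : AEStronglyMeasurable[m] g μ) (hg : MemLp g 2 μ) :
    cov[μ[X | m], g; μ] = cov[X, g; μ] := by
  have hXg : Integrable (X * g) μ := hX.integrable_mul hg
  have hpull : ∫ ω, (μ[X | m] * g) ω ∂μ = ∫ ω, (X * g) ω ∂μ := by
    rw [← integral_condExp hm (f := X * g)]
    exact integral_congr_ae
      (condExp_mul_of_aestronglyMeasurable_right hgm hXg (hX.integrable one_le_two)).symm
  rw [covariance_eq_sub (hX.condExp one_le_two) hg, covariance_eq_sub hX hg, hpull,
    integral_condExp hm]

end Covariance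

section Correlation

variable {Ω : Type} {m mΩ : MeasurableSpace Ω} {μ : Measure Ω} {X g : Ω → ℝ}

lemma corr_eq_covariance_div (U V : Ω → ℝ) :
    corr μ U V = cov[U, V; μ] / (√Var[U; μ] * √Var[V; μ]) := rfl

variable [IsProbabilityMeasure μ]

lemma corr_condExp (hm : m ≤ mΩ) (hX : MemLp X 2 μ) :
    corr μ X μ[X | m] = √Var[μ[X | m]; μ] / √Var[X; μ] := by
  have hE := hX.condExp (m := m) one_le_two
  rcases eq_or_ne √Var[μ[X | m]; μ] 0 with h0 | h0
  · rw [corr_eq_covariance_div, h0, mul_zero, div_zero, zero_div]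
  rw [corr_eq_covariance_div,
    ← covariance_condExp_left hm hX stronglyMeasurable_condExp.aestronglyMeasurable hE,
    covariance_self hE.aemeasurable, mul_comm (√Var[X; μ]), ← mul_div_mul_left _ (√Var[X; μ]) h0,
    Real.mul_self_sqrt (variance_nonneg _ μ)]

lemma abs_corr_le_corr_condExp (hm : m ≤ mΩ) (hX : MemLp X 2 μ)
    (hgm : AEStronglyMeasurable[m] g μ) (hg : MemLp g 2 μ) :
    |corr μ X g| ≤ corr μ X μ[X | m] := by
  rw [corr_condExp hm hX]
  rcases eq_or_ne √Var[g; μ] 0 with hg0 | hg0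
  · rw [corr_eq_covariance_div, hg0, mul_zero, div_zero, abs_zero]
    positivity
  rw [corr_eq_covariance_div, abs_div, abs_of_nonneg (mul_nonneg (sqrt_nonneg _) (sqrt_nonneg _)),
    ← covariance_condExp_left hm hX hgm hg,
    ← mul_div_mul_right √Var[μ[X | m]; μ] √Var[X; μ] hg0]
  exact div_le_div_of_nonneg_right
    (abs_covariance_le_sqrt_variance_mul (hX.condExp one_le_two) hg)
    (mul_nonneg (sqrt_nonneg _) (sqrt_nonneg _))

end Correlation

end ProbabilityTheory

theorem stmt0 {Ω : Type} [MeasurableSpace Ω] (μ : Measure Ω) [IsProbabilityMeasure μ]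
    (X Y : Ω → ℝ) (hY : Measurable Y)
    (hX2 : MemLp X 2 μ) :
    sSup {r : ℝ | ∃ f : ℝ → ℝ, Measurable f ∧ MemLp (fun ω => f (Y ω)) 2 μ ∧
        variance (fun ω => f (Y ω)) μ ≠ 0 ∧ r = corr μ X (fun ω => f (Y ω))}
      = corr μ X (μ[X | MeasurableSpace.comap Y Real.measurableSpace]) ∧
    corr μ X (μ[X | MeasurableSpace.comap Y Real.measurableSpace]) =
      Real.sqrt (∫ ω, ((μ[X | MeasurableSpace.comap Y Real.measurableSpace]) ω
          - ∫ x, X x ∂μ)^2 ∂μ) / Real.sqrt (variance X μ) := by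
  have hm := hY.comap_le
  have hcorr := corr_condExp hm hX2
  refine ⟨Real.sSup_eq_of_forall_abs_le ?_ ?_, ?_⟩
  · rintro r ⟨f, hf, hfY, -, rfl⟩
    exact abs_corr_le_corr_condExp hm hX2 (hf.comp (comap_measurable Y)).aestronglyMeasurable hfY
  · rcases eq_or_ne Var[μ[X | MeasurableSpace.comap Y Real.measurableSpace]; μ] 0 with h0 | h0
    · exact .inr (by rw [hcorr, h0, sqrt_zero, zero_div])
    obtain ⟨f, hf, hfY⟩ := (stronglyMeasurable_condExp (m := MeasurableSpace.comap Y _) (f := X)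
      (μ := μ)).measurable.exists_eq_measurable_comp
    have hfY' : (fun ω => f (Y ω)) = μ[X | MeasurableSpace.comap Y Real.measurableSpace] :=
      hfY.symm
    exact .inl ⟨f, hf, hfY' ▸ hX2.condExp one_le_two, hfY' ▸ h0, hfY' ▸ rfl⟩
  · rw [hcorr, variance_eq_integral integrable_condExp.aemeasurable, integral_condExp hm]
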